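/- arXiv:1901.07543 — 5 statements merged into one kernel-verified Lean document; each statement's English description precedes it below -/
import Mathlib

section
/- Let n, m ∈ ℕ, D ∈ ℝ^{m×n} with D·𝟙_n = 0, Y_b = diag(b_1,…,b_m), E = diag(E_1,…,E_n) with E_i > 0, M = diag(M_1,…,M_n) with M_i ≥ 0, 𝔊 = {i : M_i > 0}, p* ∈ ℝ^n, ω∞ ∈ ℝ and λ∞ ∈ ℝ^m with 0 = −E(ω∞𝟙_n) − DᵀY_b sin λ∞ + p*. For each i let ω̄thr_i > 0 and ω̱thr_i < 0 be thresholds with ω̱thr_i < ω∞ < ω̄thr_i. Let λ, ω, u be as in the swing dynamics (λ differentiable with λ′ = Dω; M_i ω_i′ = (−Eω − DᵀY_b sin λ + p* + u)_i for i ∈ 𝔊; 0 = (−Eω − DᵀY_b sin λ + p* + u)_i for i ∉ 𝔊), and suppose additionally that for every t and every i: ω_i(t) u_i(t) ≤ 0 whenever ω_i(t) ∉ (ω̱thr_i, ω̄thr_i), and u_i(t) = 0 whenever ω_i(t) ∈ (ω̱thr_i, ω̄thr_i). Then the derivative of t ↦ V(λ(t), ω_𝔊(t)) is nonpositive at every t.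 -/
/-!
Along a trajectory, `V̇ = ∑_{i∈𝔊} M_i (ω_i - ω∞) ω̇_i + ∑_j b_j (sin λ_j - sin λ∞_j) (Dω)_j`.
Since the rows of `D` sum to zero, `Dω = D(ω - ω∞𝟙)`, so the second sum is
`∑_i (ω_i - ω∞) (Dᵀ Y_b (sin λ - sin λ∞))_i`. Subtracting the equilibrium equation from the
swing equations, every node (with or without inertia) then contributes
`(ω_i - ω∞)(-E_i (ω_i - ω∞) + u_i)`, and the sign conditions on `u_i` make `(ω_i - ω∞) u_i ≤ 0`.
-/

open Real Finset

/-- The energy function V(λ, ω_𝔊), where 𝔊 = {i | 0 < M i}. -/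
noncomputable def Venergy {n m : ℕ} (M : Fin n → ℝ) (b : Fin m → ℝ)
    (ωinf : ℝ) (lamInf : Fin m → ℝ) (lam : Fin m → ℝ) (ω : Fin n → ℝ) : ℝ :=
  (1/2) * ∑ i ∈ Finset.univ.filter (fun i => 0 < M i), M i * (ω i - ωinf)^2
    + ∑ j, b j * (Real.cos (lamInf j) - Real.cos (lam j)
        - (lam j - lamInf j) * Real.sin (lamInf j))

lemma sub_mul_nonpos_of_deadband {ω u ωinf ωl ωu : ℝ} (hl : ωl < 0) (hu : 0 < ωu)
    (hlinf : ωl ≤ ωinf) (huinf : ωinf ≤ ωu)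
    (hout : ω ∉ Set.Ioo ωl ωu → ω * u ≤ 0) (hin : ω ∈ Set.Ioo ωl ωu → u = 0) :
    (ω - ωinf) * u ≤ 0 := by
  by_cases hband : ω ∈ Set.Ioo ωl ωu
  · simp [hin hband]
  · have hωu := hout hband
    rw [Set.mem_Ioo, not_and_or, not_lt, not_lt] at hband
    rcases hband with hlow | hhigh
    · exact mul_nonpos_of_nonpos_of_nonneg (by linarith)
        (nonneg_of_mul_nonpos_right hωu (by linarith))
    · exact mul_nonpos_of_nonneg_of_nonpos (by linarith)
        (nonpos_of_mul_nonpos_right hωu (by linarith))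

lemma sum_mul_sum_eq_of_row_sum_eq_zero {ι κ R : Type*} [Fintype ι] [Fintype κ] [CommRing R]
    (D : κ → ι → R) (hD : ∀ j, ∑ i, D j i = 0) (x : κ → R) (ω : ι → R) (a : R) :
    ∑ j, x j * ∑ i, D j i * ω i = ∑ i, (ω i - a) * ∑ j, D j i * x j := by
  have hshift : ∀ j, ∑ i, D j i * ω i = ∑ i, D j i * (ω i - a) := fun j => by
    simp [mul_sub, sum_sub_distrib, ← sum_mul, hD]
  simp_rw [hshift, mul_sum]
  rw [sum_comm]
  exact sum_congr rfl fun _ _ => sum_congr rfl fun _ _ => by ring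

lemma hasDerivAt_Venergy {n m : ℕ} (M : Fin n → ℝ) (b : Fin m → ℝ) (ωinf : ℝ)
    (lamInf : Fin m → ℝ) {lam : ℝ → Fin m → ℝ} {ω : ℝ → Fin n → ℝ} {lam' : Fin m → ℝ}
    {ω' : Fin n → ℝ} {t : ℝ} (hlam : HasDerivAt lam lam' t)
    (hω : ∀ i, 0 < M i → HasDerivAt (fun s => ω s i) (ω' i) t) :
    HasDerivAt (fun s => Venergy M b ωinf lamInf (lam s) (ω s))
      (∑ i ∈ univ.filter (fun i => 0 < M i), M i * (ω t i - ωinf) * ω' i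
        + ∑ j, b j * (sin (lam t j) - sin (lamInf j)) * lam' j) t := by
  have hlamj : ∀ j, HasDerivAt (fun s => lam s j) (lam' j) t := fun j => hasDerivAt_pi.mp hlam j
  refine HasDerivAt.add ?_ (HasDerivAt.fun_sum fun j _ => ?_)
  · refine ((HasDerivAt.fun_sum fun i hi =>
      (((hω i (mem_filter.mp hi).2).sub_const ωinf).pow 2).const_mul (M i)).const_mul
      (1/2)).congr_deriv ?_
    rw [mul_sum]
    exact sum_congr rfl fun i _ => by ring
  · refine ((((hasDerivAt_const t _).sub (hlamj j).cos).sub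
      (((hlamj j).sub_const (lamInf j)).mul_const (sin (lamInf j)))).const_mul
      (b j)).congr_deriv ?_
    ring

theorem stmt2_general (n m : ℕ) (D : Fin m → Fin n → ℝ) (hD : ∀ j, ∑ i, D j i = 0)
    (b : Fin m → ℝ) (E M : Fin n → ℝ) (hE : ∀ i, 0 < E i)
    (p : Fin n → ℝ) (ωinf : ℝ) (lamInf : Fin m → ℝ)
    (heq : ∀ i, 0 = -(E i * ωinf)
      - (∑ j, D j i * (b j * Real.sin (lamInf j))) + p i)
    (ωuthr ωlthr : Fin n → ℝ)
    (hthr : ∀ i, 0 < ωuthr i ∧ ωlthr i < 0 ∧ ωlthr i < ωinf ∧ ωinf < ωuthr i)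
    (lam : ℝ → Fin m → ℝ) (ω u : ℝ → Fin n → ℝ) (ω' : ℝ → Fin n → ℝ)
    (hlam : ∀ t, HasDerivAt lam (fun j => ∑ i, D j i * ω t i) t)
    (hdyn : ∀ t, ∀ i, 0 < M i →
      HasDerivAt (fun s => ω s i) (ω' t i) t ∧
      M i * ω' t i = -(E i * ω t i)
        - (∑ j, D j i * (b j * Real.sin (lam t j))) + p i + u t i)
    (halg : ∀ t, ∀ i, ¬ 0 < M i →
      0 = -(E i * ω t i)
        - (∑ j, D j i * (b j * Real.sin (lam t j))) + p i + u t i)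
    (hsign1 : ∀ t, ∀ i, ¬ (ωlthr i < ω t i ∧ ω t i < ωuthr i) →
      ω t i * u t i ≤ 0)
    (hsign2 : ∀ t, ∀ i, (ωlthr i < ω t i ∧ ω t i < ωuthr i) → u t i = 0)
    (t : ℝ) :
    deriv (fun s => Venergy M b ωinf lamInf (lam s) (ω s)) t ≤ 0 := by
  set c : Fin n → ℝ := fun i => ∑ j, D j i * (b j * (sin (lam t j) - sin (lamInf j)))
  have hdev : ∀ i, -(E i * ω t i) - (∑ j, D j i * (b j * sin (lam t j))) + p i + u t i
      = -(E i * (ω t i - ωinf)) - c i + u t i := fun i => by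
    simp only [c, mul_sub, sum_sub_distrib]
    linarith [heq i]
  have hkinetic : ∑ i ∈ univ.filter (fun i => 0 < M i), M i * (ω t i - ωinf) * ω' t i
      = ∑ i, (ω t i - ωinf) * (-(E i * (ω t i - ωinf)) - c i + u t i) := by
    rw [sum_filter]
    refine sum_congr rfl fun i _ => ?_
    split_ifs with hi
    · rw [← hdev, ← (hdyn t i hi).2]; ring
    · rw [← hdev, ← halg t i hi, mul_zero]
  rw [(hasDerivAt_Venergy M b ωinf lamInf (hlam t) fun i hi => (hdyn t i hi).1).deriv,
    sum_mul_sum_eq_of_row_sum_eq_zero D hD _ (ω t) ωinf, hkinetic, ← sum_add_distrib]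
  refine sum_nonpos fun i _ => ?_
  obtain ⟨hu, hl, hlinf, huinf⟩ := hthr i
  have hcontrol := sub_mul_nonpos_of_deadband hl hu hlinf.le huinf.le (hsign1 t i) (hsign2 t i)
  nlinarith [hE i, sq_nonneg (ω t i - ωinf)]

/-- under the robust stability sign conditions on the control
input, the derivative of `t ↦ V(λ(t), ω_𝔊(t))` along solutions of the swing
equations is nonpositive at every time `t`. -/
theorem stmt2 (n m : ℕ) (D : Fin m → Fin n → ℝ) (hD : ∀ j, ∑ i, D j i = 0)
    (b : Fin m → ℝ) (E M : Fin n → ℝ) (hE : ∀ i, 0 < E i) (hM : ∀ i, 0 ≤ M i)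
    (p : Fin n → ℝ) (ωinf : ℝ) (lamInf : Fin m → ℝ)
    (heq : ∀ i, 0 = -(E i * ωinf)
      - (∑ j, D j i * (b j * Real.sin (lamInf j))) + p i)
    (ωuthr ωlthr : Fin n → ℝ)
    (hthr : ∀ i, 0 < ωuthr i ∧ ωlthr i < 0 ∧ ωlthr i < ωinf ∧ ωinf < ωuthr i)
    (lam : ℝ → Fin m → ℝ) (ω u : ℝ → Fin n → ℝ) (ω' : ℝ → Fin n → ℝ)
    (hlam : ∀ t, HasDerivAt lam (fun j => ∑ i, D j i * ω t i) t)
    (hdyn : ∀ t, ∀ i, 0 < M i →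
      HasDerivAt (fun s => ω s i) (ω' t i) t ∧
      M i * ω' t i = -(E i * ω t i)
        - (∑ j, D j i * (b j * Real.sin (lam t j))) + p i + u t i)
    (halg : ∀ t, ∀ i, ¬ 0 < M i →
      0 = -(E i * ω t i)
        - (∑ j, D j i * (b j * Real.sin (lam t j))) + p i + u t i)
    (hsign1 : ∀ t, ∀ i, ¬ (ωlthr i < ω t i ∧ ω t i < ωuthr i) →
      ω t i * u t i ≤ 0)
    (hsign2 : ∀ t, ∀ i, (ωlthr i < ω t i ∧ ω t i < ωuthr i) → u t i = 0)
    (t : ℝ) :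
    deriv (fun s => Venergy M b ωinf lamInf (lam s) (ω s)) t ≤ 0 :=
  stmt2_general n m D hD b E M hE p ωinf lamInf heq ωuthr ωlthr hthr lam ω u ω' hlam hdyn halg
    hsign1 hsign2 t
end

section
/- Let n, N ∈ ℕ, let I_u ⊆ {1,…,n}, and for each i ∈ I_u let thresholds satisfy ω̱thr_i < 0 < ω̄thr_i. Let Ω^ref : {0,…,N−1} → ℝ^n be any reference trajectory. Then Φ_cvx(Ω^ref) ⊆ Φ_disc, where Φ_disc is the set of pairs (Ω, U) such that for every i ∈ I_u and every k ∈ {0,…,N−1}: ω_i(k)·u_i(k) ≤ 0 whenever ω_i(k) ∉ (ω̱thr_i, ω̄thr_i), and u_i(k) = 0 whenever ω_i(k) ∈ (ω̱thr_i, ω̄thr_i). -/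
/-- The convexified stability constraint set `Φ_cvx(Ω^ref)` of Lemma 3.2. -/
def PhiCvx (n N : ℕ) (Iu : Finset (Fin n)) (ωlthr ωuthr : Fin n → ℝ)
    (Ωref : Fin N → Fin n → ℝ) :
    Set ((Fin (N + 1) → Fin n → ℝ) × (Fin N → Fin n → ℝ)) :=
  {q | ∀ i ∈ Iu, ∀ k : Fin N,
    (ωuthr i ≤ Ωref k i → ωuthr i ≤ q.1 k.castSucc i ∧ q.2 k i ≤ 0) ∧
    (Ωref k i ≤ ωlthr i → q.1 k.castSucc i ≤ ωlthr i ∧ 0 ≤ q.2 k i) ∧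
    (ωlthr i < Ωref k i ∧ Ωref k i < ωuthr i → q.2 k i = 0)}

/-- The nonconvex discrete stability constraint set `Φ_disc`. -/
def PhiDisc (n N : ℕ) (Iu : Finset (Fin n)) (ωlthr ωuthr : Fin n → ℝ) :
    Set ((Fin (N + 1) → Fin n → ℝ) × (Fin N → Fin n → ℝ)) :=
  {q | ∀ i ∈ Iu, ∀ k : Fin N,
    (¬ (ωlthr i < q.1 k.castSucc i ∧ q.1 k.castSucc i < ωuthr i) →
      q.1 k.castSucc i * q.2 k i ≤ 0) ∧
    ((ωlthr i < q.1 k.castSucc i ∧ q.1 k.castSucc i < ωuthr i) →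
      q.2 k i = 0)}

/-- inclusion part of Lemma 3.2: for thresholds
`ω̱thr_i < 0 < ω̄thr_i` (for `i ∈ I_u`) and any reference trajectory `Ω^ref`,
`Φ_cvx(Ω^ref) ⊆ Φ_disc`. -/
theorem stmt9 (n N : ℕ) (Iu : Finset (Fin n))
    (ωlthr ωuthr : Fin n → ℝ)
    (hthr : ∀ i ∈ Iu, ωlthr i < 0 ∧ 0 < ωuthr i)
    (Ωref : Fin N → Fin n → ℝ) :
    PhiCvx n N Iu ωlthr ωuthr Ωref ⊆ PhiDisc n N Iu ωlthr ωuthr := by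
  intro q hq i hi k
  obtain ⟨h1, h2, h3⟩ := hq i hi k
  obtain ⟨hl0, h0u⟩ := hthr i hi
  rcases le_or_gt (ωuthr i) (Ωref k i) with hc | hc
  · obtain ⟨hω, hu⟩ := h1 hc
    constructor
    · intro _
      exact mul_nonpos_of_nonneg_of_nonpos (le_trans h0u.le hω) hu
    · intro ⟨_, h⟩; exact absurd hω (not_le.mpr h)
  rcases le_or_gt (Ωref k i) (ωlthr i) with hc' | hc'
  · obtain ⟨hω, hu⟩ := h2 hc'
    constructor
    · intro _
      exact mul_nonpos_of_nonpos_of_nonneg (le_trans hω hl0.le) hu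
    · intro ⟨h, _⟩; exact absurd hω (not_le.mpr h)
  · have hu := h3 ⟨hc', hc⟩
    exact ⟨fun _ => by simp [hu], fun _ => hu⟩
end

section
/- Let M > 0, γ̄ > 0, c > 0, and ω̄thr < ω̄ be real numbers. Let T > 0 satisfy cT < ω̄ − ω̄thr and M − Tγ̄/(ω̄ − cT − ω̄thr) > 0. Let ω_k, ω_{k+1} ∈ ℝ satisfy |ω_{k+1} − ω_k| ≤ cT, ω_k ≤ ω̄, and suppose that whenever ω_k > ω̄thr one has M·ω_{k+1} ≤ M·ω_k + T·γ̄(ω̄ − ω_k)/(ω_k − ω̄thr). Then ω_{k+1} ≤ ω̄. -/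
/-- upper-bound induction step of Proposition 3.3.  For a node
with inertia `M > 0` running the discretized reference controller, the
discrete frequency cannot exceed the safe upper bound `ω̄` in one step,
provided the sampling period `T` is small enough and the per-step increment is
at most `c T`. -/
theorem stmt12 (M γ c T ωuthr ωu ωk ωk1 : ℝ)
    (hM : 0 < M) (hγ : 0 < γ) (hc : 0 < c) (hthr : ωuthr < ωu)
    (hT : 0 < T) (hT1 : c * T < ωu - ωuthr)
    (hT2 : 0 < M - T * γ / (ωu - c * T - ωuthr))
    (hinc : |ωk1 - ωk| ≤ c * T) (hk : ωk ≤ ωu)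
    (hctrl : ωuthr < ωk →
      M * ωk1 ≤ M * ωk + T * (γ * (ωu - ωk) / (ωk - ωuthr))) :
    ωk1 ≤ ωu := by
  rcases le_or_gt ωk (ωu - c * T) with h | h
  · have := (abs_le.mp hinc).2
    linarith
  · have hden0 : 0 < ωu - c * T - ωuthr := by linarith
    have hden : 0 < ωk - ωuthr := by linarith
    have hctrl' := hctrl (by linarith)
    -- Tγ/(ωk-ωuthr) ≤ Tγ/(ωu-cT-ωuthr) < M
    have hdiv : T * γ / (ωk - ωuthr) ≤ T * γ / (ωu - c * T - ωuthr) :=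
      div_le_div_of_nonneg_left (by positivity) hden0 (by linarith)
    have hpos : 0 < M - T * γ / (ωk - ωuthr) := by linarith
    have key : M * ωk1 - M * ωu ≤ (ωk - ωu) * (M - T * γ / (ωk - ωuthr)) := by
      have : T * (γ * (ωu - ωk) / (ωk - ωuthr)) =
          -((ωk - ωu) * (T * γ / (ωk - ωuthr))) := by
        field_simp; ring
      nlinarith [hctrl']
    nlinarith [mul_nonpos_of_nonpos_of_nonneg (by linarith : ωk - ωu ≤ 0) hpos.le]
end

section
/- Let M > 0, γ̱ > 0, c > 0, and ω̱ < ω̱thr be real numbers. Let T > 0 satisfy cT < ω̱thr − ω̱ and M − Tγ̱/(ω̱thr − cT − ω̱) > 0. Let ω_k, ω_{k+1} ∈ ℝ satisfy |ω_{k+1} − ω_k| ≤ cT, ω_k ≥ ω̱, and suppose that whenever ω_k < ω̱thr one has M·ω_{k+1} ≥ M·ω_k + T·γ̱(ω̱ − ω_k)/(ω̱thr − ω_k). Then ω_{k+1} ≥ ω̱. -/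
/-- lower-bound induction step of Proposition 3.3, symmetric to
the upper-bound case.  For a node with inertia `M > 0` running the discretized
reference controller, the discrete frequency cannot fall below the safe lower
bound `ω̱` in one step, provided the sampling period `T` is small enough and
the per-step increment is at most `c T`. -/
theorem stmt13 (M γ c T ωlthr ωl ωk ωk1 : ℝ)
    (hM : 0 < M) (hγ : 0 < γ) (hc : 0 < c) (hthr : ωl < ωlthr)
    (hT : 0 < T) (hT1 : c * T < ωlthr - ωl)
    (hT2 : 0 < M - T * γ / (ωlthr - c * T - ωl))
    (hinc : |ωk1 - ωk| ≤ c * T) (hk : ωl ≤ ωk)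
    (hctrl : ωk < ωlthr →
      M * ωk + T * (γ * (ωl - ωk) / (ωlthr - ωk)) ≤ M * ωk1) :
    ωl ≤ ωk1 := by
  rw [abs_le] at hinc
  by_cases hbig : ωl + c * T ≤ ωk
  · linarith [hinc.1]
  · push_neg at hbig
    have hklt : ωk < ωlthr := by linarith
    have hctrl := hctrl hklt
    have hden : 0 < ωlthr - ωk := by linarith
    have hden2 : 0 < ωlthr - c * T - ωl := by linarith
    -- T*γ/(ωlthr-ωk) ≤ T*γ/(ωlthr-c*T-ωl) < M
    have h1 : T * γ / (ωlthr - ωk) ≤ T * γ / (ωlthr - c * T - ωl) := by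
      apply div_le_div_of_nonneg_left (by positivity) hden2 (by linarith)
    have h2 : T * γ / (ωlthr - ωk) < M := by linarith
    -- key algebra: M*(ωk1 - ωl) ≥ (ωk - ωl)*(M - T*γ/(ωlthr-ωk)) ≥ 0
    have key : T * (γ * (ωl - ωk) / (ωlthr - ωk))
        = -((ωk - ωl) * (T * γ / (ωlthr - ωk))) := by
      field_simp
      ring
    have h3 : 0 ≤ (ωk - ωl) * (M - T * γ / (ωlthr - ωk)) :=
      mul_nonneg (by linarith) (by linarith)
    nlinarith [hctrl, key, h3]
end

section
/- Let E > 0, γ̄ > 0, γ̱ > 0, ϑ ∈ ℝ, and thresholds ω̱ < ω̱thr < ω̄thr < ω̄. Define u : ℝ → ℝ by u(ω) = min{0, γ̄(ω̄ − ω)/(ω − ω̄thr) − (ϑ − Eω)} if ω > ω̄thr, u(ω) = 0 if ω̱thr ≤ ω ≤ ω̄thr, and u(ω) = max{0, γ̱(ω̱ − ω)/(ω̱thr − ω) − (ϑ − Eω)} if ω < ω̱thr. Then the equation 0 = ϑ − Eω + u(ω) has exactly one solution ω ∈ ℝ, namely ω = min(ω̄, max(ω̱, ϑ/E)); in particular the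 solution satisfies ω̱ ≤ ω ≤ ω̄. -/
/-!
Write `g ω = ϑ - E ω` and `F ω = g ω + u ω`. Above the upper threshold
`F = min g h⁺` with `h⁺ ω = γ̄ (ω̄ - ω) / (ω - ω̄thr)`, below the lower one `F = max g h⁻` with
`h⁻ ω = γ̱ (ω̱ - ω) / (ω̱thr - ω)`, and `F = g` in between. All of `g`, `h⁺`, `h⁻` are strictly
decreasing on their regions, and `F ≤ g` away from the lower region while `F ≥ g` away from
the upper one, so `F` is strictly decreasing on all of `ℝ` and has at most one zero.
The clamp `min ω̄ (max ω̱ (ϑ / E))` is a zero: at `ω̱` (resp. `ω̄`) the barrier `h⁻` (resp. `h⁺`)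
vanishes while `g` has the right sign, and strictly between them `g` vanishes.
-/

open Set

theorem add_min_zero_sub {α : Type*} [AddCommGroup α] [LinearOrder α] [IsOrderedAddMonoid α]
    (c x : α) : c + min 0 (x - c) = min c x := by
  rw [← min_add_add_left, add_zero, add_sub_cancel]

theorem add_max_zero_sub {α : Type*} [AddCommGroup α] [LinearOrder α] [IsOrderedAddMonoid α]
    (c x : α) : c + max 0 (x - c) = max c x := by
  rw [← max_add_add_left, add_zero, add_sub_cancel]

section StrictAntiOn

variable {α β : Type*} [Preorder α] [LinearOrder β] {f g : α → β} {s : Set α}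

theorem StrictAntiOn.min (hf : StrictAntiOn f s) (hg : StrictAntiOn g s) :
    StrictAntiOn (fun x => min (f x) (g x)) s :=
  fun _ ha _ hb hab => min_lt_min (hf ha hb hab) (hg ha hb hab)

theorem StrictAntiOn.max (hf : StrictAntiOn f s) (hg : StrictAntiOn g s) :
    StrictAntiOn (fun x => max (f x) (g x)) s :=
  fun _ ha _ hb hab => max_lt_max (hf ha hb hab) (hg ha hb hab)

end StrictAntiOn

theorem StrictAnti.of_strictAntiOn_Iio_Ioi {α β : Type*} [LinearOrder α] [Preorder β]
    {f g : α → β} {a b : α} (hg : StrictAnti g) (hlow : StrictAntiOn f (Iio a))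
    (hup : StrictAntiOn f (Ioi b)) (hge : ∀ x ≤ b, g x ≤ f x) (hle : ∀ x, a ≤ x → f x ≤ g x) :
    StrictAnti f := by
  intro x y hxy
  by_cases hy : y < a
  · exact hlow (hxy.trans hy) hy hxy
  by_cases hx : b < x
  · exact hup hx (hx.trans hxy) hxy
  calc f y ≤ g y := hle y (not_lt.1 hy)
    _ < g x := hg hxy
    _ ≤ f x := hge x (not_lt.1 hx)

theorem strictAntiOn_mul_sub_div_sub_Ioi {γ t w : ℝ} (hγ : 0 < γ) (htw : t < w) :
    StrictAntiOn (fun ω => γ * (w - ω) / (ω - t)) (Ioi t) := by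
  intro a (ha : t < a) b (hb : t < b) hab
  rw [div_lt_div_iff₀ (sub_pos.2 hb) (sub_pos.2 ha)]
  nlinarith [mul_pos hγ (mul_pos (sub_pos.2 hab) (sub_pos.2 htw))]

theorem strictAntiOn_mul_sub_div_sub_Iio {γ t w : ℝ} (hγ : 0 < γ) (hwt : w < t) :
    StrictAntiOn (fun ω => γ * (w - ω) / (t - ω)) (Iio t) := by
  intro a (ha : a < t) b (hb : b < t) hab
  rw [div_lt_div_iff₀ (sub_pos.2 hb) (sub_pos.2 ha)]
  nlinarith [mul_pos hγ (mul_pos (sub_pos.2 hab) (sub_pos.2 hwt))]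

section ZeroInertiaNode

variable {E γu γl ϑ ωl ωlthr ωuthr ωu : ℝ} {u : ℝ → ℝ}
  (hu : ∀ ω : ℝ, u ω =
      if ωuthr < ω then
        min 0 (γu * (ωu - ω) / (ω - ωuthr) - (ϑ - E * ω))
      else if ω < ωlthr then
        max 0 (γl * (ωl - ω) / (ωlthr - ω) - (ϑ - E * ω))
      else 0)
include hu

theorem residual_eq_min {ω : ℝ} (hω : ωuthr < ω) :
    ϑ - E * ω + u ω = min (ϑ - E * ω) (γu * (ωu - ω) / (ω - ωuthr)) := by
  rw [hu, if_pos hω, add_min_zero_sub]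

theorem residual_eq_max (h2 : ωlthr < ωuthr) {ω : ℝ} (hω : ω < ωlthr) :
    ϑ - E * ω + u ω = max (ϑ - E * ω) (γl * (ωl - ω) / (ωlthr - ω)) := by
  rw [hu, if_neg (by linarith), if_pos hω, add_max_zero_sub]

theorem residual_eq_of_mem_Icc {ω : ℝ} (hω : ω ∈ Icc ωlthr ωuthr) :
    ϑ - E * ω + u ω = ϑ - E * ω := by
  rw [hu, if_neg (not_lt.2 hω.2), if_neg (not_lt.2 hω.1), add_zero]

theorem strictAnti_residual (hE : 0 < E) (hγu : 0 < γu) (hγl : 0 < γl)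
    (h1 : ωl < ωlthr) (h2 : ωlthr < ωuthr) (h3 : ωuthr < ωu) :
    StrictAnti (fun ω => ϑ - E * ω + u ω) := by
  have hg : StrictAnti (fun ω : ℝ => ϑ - E * ω) := fun a b hab => by
    simpa using mul_lt_mul_of_pos_left hab hE
  refine hg.of_strictAntiOn_Iio_Ioi (a := ωlthr) (b := ωuthr) ?_ ?_ (fun ω hω => ?_)
    (fun ω hω => ?_)
  · refine ((hg.strictAntiOn _).max (strictAntiOn_mul_sub_div_sub_Iio hγl h1)).congr
      fun ω (hω : ω < ωlthr) => (residual_eq_max hu h2 hω).symm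
  · refine ((hg.strictAntiOn _).min (strictAntiOn_mul_sub_div_sub_Ioi hγu h3)).congr
      fun ω (hω : ωuthr < ω) => (residual_eq_min hu hω).symm
  · rcases lt_or_ge ω ωlthr with hlow | hmid
    · exact (residual_eq_max hu h2 hlow).symm ▸ le_max_left _ _
    · exact (residual_eq_of_mem_Icc hu ⟨hmid, hω⟩).ge
  · rcases lt_or_ge ωuthr ω with hup | hmid
    · exact (residual_eq_min hu hup).symm ▸ min_le_left _ _
    · exact (residual_eq_of_mem_Icc hu ⟨hω, hmid⟩).le

theorem residual_clamp_eq_zero (hE : 0 < E) (hγu : 0 < γu) (hγl : 0 < γl)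
    (h1 : ωl < ωlthr) (h2 : ωlthr < ωuthr) (h3 : ωuthr < ωu) :
    ϑ - E * min ωu (max ωl (ϑ / E)) + u (min ωu (max ωl (ϑ / E))) = 0 := by
  rcases le_total (ϑ / E) ωl with hlow | hs
  · have hϑ : ϑ - E * ωl ≤ 0 := by linarith [(div_le_iff₀' hE).1 hlow]
    rw [max_eq_left hlow, min_eq_right (by linarith), residual_eq_max hu h2 h1]
    simp [hϑ]
  rcases le_total ωu (ϑ / E) with hup | hs'
  · have hϑ : 0 ≤ ϑ - E * ωu := by linarith [(le_div_iff₀' hE).1 hup]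
    rw [max_eq_right hs, min_eq_left hup, residual_eq_min hu (by linarith)]
    simp [hϑ]
  have hg : ϑ - E * (ϑ / E) = 0 := by field_simp; ring
  rw [max_eq_right hs, min_eq_right hs']
  rcases lt_or_ge ωuthr (ϑ / E) with hR | hM
  · rw [residual_eq_min hu hR, hg]
    exact min_eq_left (div_nonneg (by nlinarith) (by linarith))
  rcases lt_or_ge (ϑ / E) ωlthr with hL | hM'
  · rw [residual_eq_max hu h2 hL, hg]
    exact max_eq_left (div_nonpos_of_nonpos_of_nonneg (by nlinarith) (by linarith))
  · rw [residual_eq_of_mem_Icc hu ⟨hM', hM⟩, hg]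

end ZeroInertiaNode

/-- for a zero-inertia node, the algebraic relation
`0 = ϑ - E ω + u(ω)` with the piecewise reference controller `u` has exactly
one solution, namely `ω = min(ω̄, max(ω̱, ϑ/E))`; in particular the solution
lies in the safe interval `[ω̱, ω̄]`. -/
theorem stmt14 (E γu γl ϑ ωl ωlthr ωuthr ωu : ℝ)
    (hE : 0 < E) (hγu : 0 < γu) (hγl : 0 < γl)
    (h1 : ωl < ωlthr) (h2 : ωlthr < ωuthr) (h3 : ωuthr < ωu)
    (u : ℝ → ℝ)
    (hu : ∀ ω : ℝ, u ω =
      if ωuthr < ω then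
        min 0 (γu * (ωu - ω) / (ω - ωuthr) - (ϑ - E * ω))
      else if ω < ωlthr then
        max 0 (γl * (ωl - ω) / (ωlthr - ω) - (ϑ - E * ω))
      else 0) :
    (0 = ϑ - E * min ωu (max ωl (ϑ / E)) + u (min ωu (max ωl (ϑ / E)))) ∧
    (∀ ω : ℝ, 0 = ϑ - E * ω + u ω → ω = min ωu (max ωl (ϑ / E))) ∧
    ωl ≤ min ωu (max ωl (ϑ / E)) ∧ min ωu (max ωl (ϑ / E)) ≤ ωu := by
  have hzero := residual_clamp_eq_zero hu hE hγu hγl h1 h2 h3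
  refine ⟨hzero.symm, fun ω hω => ?_, le_min (by linarith) (le_max_left _ _), min_le_left _ _⟩
  exact (strictAnti_residual hu hE hγu hγl h1 h2 h3).injective (hω.symm.trans hzero.symm)
end
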